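/- arXiv:1306.5949 — 2 statements merged into one kernel-verified Lean document; each statement's English description precedes it below -/
import Mathlib

section
/- Define $\varphi_s = h_1 \cdots h_{s-1}\, dh_s\, h_s^{-1} \cdots h_1^{-1}$ on $G^p$ ($G = GL(n,\mathbb{C})$), and on $G^{p+1}$ define $\theta_i = g_i^{-1} dg_i$ (pulled back via the $i$-th projection). Let $\gamma : G^{p+1} \to G^p$, $\gamma(g_0,\dots,g_p) = (g_0g_1^{-1}, \dots, g_{p-1}g_p^{-1})$. Then for any indices $i_1, \dots, i_p$, $\gamma^*\,\mathrm{tr}(\varphi_{i_1}\varphi_{i_2}\cdots\varphi_{i_p}) = \mathrm{tr}\big((\theta_{i_1-1}-\theta_{i_1})(\theta_{i_2-1}-\theta_{i_2})\cdots(\theta_{i_p-1}-\theta_{i_p})\big)$. -/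
/-! Under `γ` the partial products `h₁⋯h_m` pull back to `g₀g_m⁻¹`, so
`γ*φ_s = g₀g_{s-1}⁻¹ · d(g_{s-1}g_s⁻¹)(g_{s-1}g_s⁻¹)⁻¹ · g_{s-1}g₀⁻¹`, and the Maurer–Cartan
identity `d(gh⁻¹)(gh⁻¹)⁻¹ = g(g⁻¹dg - h⁻¹dh)g⁻¹` turns this into `g₀(θ_{s-1} - θ_s)g₀⁻¹`.
In the product the conjugations by `g₀` cancel, and the remaining one disappears under the
trace because the entries of `g₀`, being of degree `0`, commute with all homogeneous forms. -/

/-- An abstract model of the de Rham algebra of (scalar-valued) differential forms: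
a ring `Ω` with a degree predicate, graded commutativity, and an exterior
differential `d` which is a graded antiderivation of square zero. -/
structure DiffCalc (R : Type*) (Ω : Type*) [CommRing R] [Ring Ω] [Algebra R Ω] where
  d : Ω →ₗ[R] Ω
  deg : ℕ → Ω → Prop
  deg_add : ∀ k x y, deg k x → deg k y → deg k (x + y)
  deg_mul : ∀ k l x y, deg k x → deg l y → deg (k + l) (x * y)
  deg_one : deg 0 1
  deg_d : ∀ k x, deg k x → deg (k + 1) (d x)
  gcomm : ∀ k l x y, deg k x → deg l y → x * y = ((-1 : ℤ) ^ (k * l)) • (y * x)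
  leibniz : ∀ k x y, deg k x → d (x * y) = d x * y + ((-1 : ℤ) ^ k) • (x * d y)
  d_d : ∀ x, d (d x) = 0

theorem List.prod_map_take_finRange_telescope {M : Type*} [Monoid M] {p : ℕ}
    (a b : Fin (p + 1) → M) (hab : ∀ s, a s * b s = 1) (hba : ∀ s, b s * a s = 1)
    (m : ℕ) (hm : m ≤ p) :
    (((List.finRange p).take m).map fun s => a s.castSucc * b s.succ).prod =
      a 0 * b ⟨m, Nat.lt_succ_of_le hm⟩ := by
  induction m with
  | zero => simp [hab]
  | succ m ih =>
    rw [List.take_add_one, List.getElem?_eq_getElem (by simpa using hm), List.map_append,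
      List.prod_append, ih (by omega)]
    simp only [List.getElem_finRange, Option.toList_some, List.map_cons, List.map_nil,
      List.prod_singleton, Fin.cast_mk, Fin.castSucc_mk, Fin.succ_mk]
    rw [mul_assoc, ← mul_assoc (b _), hba, one_mul]

theorem List.prod_reverse_map_take_finRange_telescope {M : Type*} [Monoid M] {p : ℕ}
    (a b : Fin (p + 1) → M) (hab : ∀ s, a s * b s = 1) (hba : ∀ s, b s * a s = 1)
    (m : ℕ) (hm : m ≤ p) :
    (((List.finRange p).take m).map fun s => a s.succ * b s.castSucc).reverse.prod =
      a ⟨m, Nat.lt_succ_of_le hm⟩ * b 0 := by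
  have h := congrArg MulOpposite.unop <| List.prod_map_take_finRange_telescope
    (MulOpposite.op ∘ b) (MulOpposite.op ∘ a)
    (fun s => congrArg MulOpposite.op (hab s)) (fun s => congrArg MulOpposite.op (hba s)) m hm
  rwa [MulOpposite.unop_list_prod, List.map_map] at h

theorem List.prod_map_mul_mul_of_mul_eq_one {M : Type*} [Monoid M] {a b : M}
    (hab : a * b = 1) (hba : b * a = 1) (l : List M) :
    (l.map fun x => a * x * b).prod = a * l.prod * b := by
  induction l with
  | nil => simp [hab]
  | cons x l ih =>
    rw [List.map_cons, List.prod_cons, ih, List.prod_cons]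
    simp only [mul_assoc]
    rw [← mul_assoc b, hba, one_mul]

theorem Matrix.trace_mul_comm_of_commute {m n R : Type*} [Fintype m] [Fintype n]
    [AddCommMonoid R] [Mul R] (A : Matrix m n R) (B : Matrix n m R)
    (h : ∀ i j, Commute (A i j) (B j i)) : (A * B).trace = (B * A).trace := by
  simp only [Matrix.trace, Matrix.diag, Matrix.mul_apply]
  rw [Finset.sum_comm]
  exact Finset.sum_congr rfl fun j _ => Finset.sum_congr rfl fun i _ => (h i j).eq

theorem Matrix.trace_conj_of_commute {n R : Type*} [Fintype n] [DecidableEq n] [Semiring R]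
    (P X Q : Matrix n n R) (hQP : Q * P = 1) (h : ∀ i j, Commute (P i j) ((X * Q) j i)) :
    (P * X * Q).trace = X.trace := by
  rw [mul_assoc, trace_mul_comm_of_commute _ _ h, mul_assoc, hQP, mul_one]

namespace DiffCalc

variable {R Ω : Type*} [CommRing R] [Ring Ω] [Algebra R Ω] (C : DiffCalc R Ω)

theorem d_one : C.d 1 = 0 := by
  simpa using C.leibniz 0 1 1 C.deg_one

variable {C}

theorem commute_of_deg_zero {k : ℕ} {x y : Ω} (hx : C.deg 0 x) (hy : C.deg k y) :
    Commute x y := by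
  show x * y = y * x
  simpa using C.gcomm 0 k x y hx hy

theorem mem_centralizer_of_deg {k : ℕ} {y : Ω} (hy : C.deg k y) :
    y ∈ Subring.centralizer {x | C.deg 0 x} :=
  Subring.mem_centralizer_iff.mpr fun _ hx => commute_of_deg_zero hx hy

variable {l m o : Type*}

variable (C) in
theorem map_d_one [DecidableEq m] : (1 : Matrix m m Ω).map C.d = 0 := by
  ext i j
  by_cases h : i = j <;> simp [h, C.d_one]

theorem map_d_mul [Fintype m] (M : Matrix l m Ω) (N : Matrix m o Ω)
    (hM : ∀ i j, C.deg 0 (M i j)) :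
    (M * N).map C.d = M.map C.d * N + M * N.map C.d := by
  ext i j
  simp only [Matrix.map_apply, Matrix.mul_apply, Matrix.add_apply, map_sum,
    ← Finset.sum_add_distrib, C.leibniz 0 _ _ (hM i _), pow_zero, one_smul]

variable [Fintype m] [DecidableEq m]

theorem map_d_of_mul_eq_one {M N : Matrix m m Ω} (hM : ∀ i j, C.deg 0 (M i j))
    (hMN : M * N = 1) (hNM : N * M = 1) : N.map C.d = -(N * M.map C.d * N) := by
  have h := congrArg (N * ·) (map_d_mul M N hM)
  simp only [hMN, map_d_one, mul_zero, mul_add, ← mul_assoc, hNM, one_mul] at h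
  rw [eq_neg_iff_add_eq_zero, add_comm, ← h]

/-- The Maurer–Cartan identity `d(gh⁻¹)(gh⁻¹)⁻¹ = g(g⁻¹dg - h⁻¹dh)g⁻¹`, with `g' = g⁻¹` and
`h' = h⁻¹`. -/
theorem map_d_mul_mul_eq_conj {g g' h h' : Matrix m m Ω} (hg : ∀ i j, C.deg 0 (g i j))
    (hh : ∀ i j, C.deg 0 (h i j)) (hgg' : g * g' = 1) (hhh' : h * h' = 1) (hh'h : h' * h = 1) :
    (g * h').map C.d * (h * g') = g * (g' * g.map C.d - h' * h.map C.d) * g' := by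
  rw [map_d_mul g h' hg, map_d_of_mul_eq_one hh hhh' hh'h]
  simp only [mul_sub, sub_mul, mul_neg, ← mul_assoc, hgg', one_mul, ← sub_eq_add_neg]
  simp only [mul_assoc, hh'h, mul_one]

theorem trace_conj_eq {g g' X : Matrix m m Ω} (hg : ∀ i j, C.deg 0 (g i j))
    (hg' : ∀ i j, C.deg 0 (g' i j)) (hg'g : g' * g = 1)
    (hX : X ∈ (Subring.centralizer {x | C.deg 0 x}).matrix) :
    (g * X * g').trace = X.trace := by
  have hXg' : X * g' ∈ (Subring.centralizer {x | C.deg 0 x}).matrix :=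
    Subring.mul_mem _ hX fun i j => mem_centralizer_of_deg (hg' i j)
  exact Matrix.trace_conj_of_commute g X g' hg'g fun i j =>
    Subring.mem_centralizer_iff.mp (hXg' j i) _ (hg i j)

theorem mul_map_d_mem_centralizer {g g' : Matrix m m Ω} (hg : ∀ i j, C.deg 0 (g i j))
    (hg' : ∀ i j, C.deg 0 (g' i j)) :
    g' * g.map C.d ∈ (Subring.centralizer {x | C.deg 0 x}).matrix :=
  Subring.mul_mem _ (fun i j => mem_centralizer_of_deg (hg' i j))
    fun i j => mem_centralizer_of_deg (C.deg_d 0 _ (hg i j))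

variable (C) in
/-- The form `φ_{s+1} = h₁⋯h_s dh_{s+1} h_{s+1}⁻¹⋯h₁⁻¹`, where `H s = h_{s+1}` and
`Hinv s = h_{s+1}⁻¹`. -/
def phi {n p : ℕ} (H Hinv : Fin p → Matrix (Fin n) (Fin n) Ω) (s : Fin p) :
    Matrix (Fin n) (Fin n) Ω :=
  (((List.finRange p).take s).map H).prod * (H s).map C.d * Hinv s *
    (((List.finRange p).take s).map Hinv).reverse.prod

theorem mapMatrix_phi {Ω1 Ω2 : Type*} [Ring Ω1] [Algebra R Ω1] [Ring Ω2] [Algebra R Ω2]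
    {C1 : DiffCalc R Ω1} {C2 : DiffCalc R Ω2} {n p : ℕ}
    {H Hinv : Fin p → Matrix (Fin n) (Fin n) Ω1} {Gm Gi : Fin (p + 1) → Matrix (Fin n) (Fin n) Ω2}
    {γ : Ω1 →+* Ω2} (hinv : ∀ s, H s * Hinv s = 1)
    (hGinv : ∀ s, Gm s * Gi s = 1) (hGinv' : ∀ s, Gi s * Gm s = 1)
    (hdegG : ∀ s i j, C2.deg 0 (Gm s i j))
    (hγ : ∀ s, (H s).map γ = Gm s.castSucc * Gi s.succ)
    (hγd : ∀ x, γ (C1.d x) = C2.d (γ x)) (s : Fin p) :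
    γ.mapMatrix (C1.phi H Hinv s) =
      Gm 0 * (Gi s.castSucc * (Gm s.castSucc).map C2.d - Gi s.succ * (Gm s.succ).map C2.d) *
        Gi 0 := by
  have cancel : ∀ s X, Gi s * (Gm s * X) = X := fun s X => by rw [← mul_assoc, hGinv', one_mul]
  have hγH : ∀ s, γ.mapMatrix (H s) = Gm s.castSucc * Gi s.succ := hγ
  have hγHinv : ∀ s, γ.mapMatrix (Hinv s) = Gm s.succ * Gi s.castSucc := fun s =>
    (left_inv_eq_right_inv (a := γ.mapMatrix (H s)) (by rw [hγH, mul_assoc, cancel, hGinv])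
      (by rw [← map_mul, hinv, map_one])).symm
  have hγdH : γ.mapMatrix ((H s).map C1.d) = (γ.mapMatrix (H s)).map C2.d := by
    ext; simp [hγd]
  have hprefix : γ.mapMatrix (((List.finRange p).take s).map H).prod =
      Gm 0 * Gi s.castSucc := by
    rw [map_list_prod, List.map_map, (funext hγH : γ.mapMatrix ∘ H = _)]
    exact List.prod_map_take_finRange_telescope Gm Gi hGinv hGinv' s s.is_le'
  have hsuffix : γ.mapMatrix (((List.finRange p).take s).map Hinv).reverse.prod =
      Gm s.castSucc * Gi 0 := by
    rw [map_list_prod, List.map_reverse, List.map_map, (funext hγHinv : γ.mapMatrix ∘ Hinv = _)]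
    exact List.prod_reverse_map_take_finRange_telescope Gm Gi hGinv hGinv' s s.is_le'
  rw [phi, map_mul, map_mul, map_mul, hprefix, hsuffix, hγdH, hγH, hγHinv, mul_assoc (Gm 0 * _),
    map_d_mul_mul_eq_conj (hdegG _) (hdegG _) (hGinv _) (hGinv _) (hGinv' _)]
  simp only [mul_assoc, cancel]

end DiffCalc

theorem stmt_9_general {Ω1 Ω2 : Type*} [Ring Ω1] [Algebra ℂ Ω1] [Ring Ω2] [Algebra ℂ Ω2]
    (C1 : DiffCalc ℂ Ω1) (C2 : DiffCalc ℂ Ω2) (n p : ℕ)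
    (H Hinv : Fin p → Matrix (Fin n) (Fin n) Ω1)
    (Gm Gi : Fin (p + 1) → Matrix (Fin n) (Fin n) Ω2)
    (γ : Ω1 →ₐ[ℂ] Ω2)
    (hinv : ∀ s, H s * Hinv s = 1)
    (hGinv : ∀ s, Gm s * Gi s = 1) (hGinv' : ∀ s, Gi s * Gm s = 1)
    (hdegG : ∀ s i j, C2.deg 0 (Gm s i j)) (hdegGi : ∀ s i j, C2.deg 0 (Gi s i j))
    (hγ : ∀ s, (H s).map ⇑γ = Gm s.castSucc * Gi s.succ)
    (hγd : ∀ x, γ (C1.d x) = C2.d (γ x))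
    (idx : Fin p → Fin p) :
    γ ((List.ofFn (fun k : Fin p =>
          ((((List.finRange p).take (idx k : ℕ)).map H).prod *
            ((H (idx k)).map ⇑C1.d) * Hinv (idx k) *
            ((((List.finRange p).take (idx k : ℕ)).map Hinv).reverse).prod))).prod.trace) =
      (List.ofFn (fun k : Fin p =>
          (Gi (idx k).castSucc * (Gm (idx k).castSucc).map ⇑C2.d) -
            (Gi (idx k).succ * (Gm (idx k).succ).map ⇑C2.d))).prod.trace := by
  set Z := (Subring.centralizer {x | C2.deg 0 x}).matrix (n := Fin n)
  set X := (List.ofFn fun k : Fin p =>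
    Gi (idx k).castSucc * (Gm (idx k).castSucc).map C2.d -
      Gi (idx k).succ * (Gm (idx k).succ).map C2.d).prod
  have hX : X ∈ Z := Z.list_prod_mem <| List.forall_mem_ofFn_iff.mpr fun k =>
    Z.sub_mem (DiffCalc.mul_map_d_mem_centralizer (hdegG _) (hdegGi _))
      (DiffCalc.mul_map_d_mem_centralizer (hdegG _) (hdegGi _))
  rw [AddMonoidHom.map_trace γ, ← DiffCalc.trace_conj_eq (hdegG 0) (hdegGi 0) (hGinv' 0) hX]
  change ((γ : Ω1 →+* Ω2).mapMatrix (List.ofFn fun k => C1.phi H Hinv (idx k)).prod).trace = _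
  rw [map_list_prod, List.map_ofFn, ← List.prod_map_mul_mul_of_mul_eq_one (hGinv 0) (hGinv' 0),
    List.map_ofFn]
  simp only [Function.comp_def, DiffCalc.mapMatrix_phi (γ := γ) hinv hGinv hGinv' hdegG hγ hγd]

/-- With `φ_s = h₁⋯h_{s-1} dh_s h_s⁻¹⋯h₁⁻¹` on `G^p` (`G = GL(n,ℂ)`, coordinates
`H 0, …, H (p-1)` playing `h₁, …, h_p`), `θ_i = g_i⁻¹ dg_i` on `G^{p+1}` and
`γ(g₀,…,g_p) = (g₀g₁⁻¹, …, g_{p-1}g_p⁻¹)`, one has, for any indices `i₁, …, i_p`,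
`γ* tr(φ_{i₁} ⋯ φ_{i_p}) = tr((θ_{i₁-1} - θ_{i₁}) ⋯ (θ_{i_p-1} - θ_{i_p}))`.
Forms on `G^p` and `G^{p+1}` are modelled by rings `Ω1`, `Ω2` with differential
calculi, the coordinates by matrices of degree-zero entries, and `γ*` by an algebra
map determined on coordinates by `γ`. -/
theorem stmt_9 {Ω1 Ω2 : Type*} [Ring Ω1] [Algebra ℂ Ω1] [Ring Ω2] [Algebra ℂ Ω2]
    (C1 : DiffCalc ℂ Ω1) (C2 : DiffCalc ℂ Ω2) (n p : ℕ)
    (H Hinv : Fin p → Matrix (Fin n) (Fin n) Ω1)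
    (Gm Gi : Fin (p + 1) → Matrix (Fin n) (Fin n) Ω2)
    (γ : Ω1 →ₐ[ℂ] Ω2)
    (hinv : ∀ s, H s * Hinv s = 1) (hinv' : ∀ s, Hinv s * H s = 1)
    (hGinv : ∀ s, Gm s * Gi s = 1) (hGinv' : ∀ s, Gi s * Gm s = 1)
    (hdegH : ∀ s i j, C1.deg 0 (H s i j)) (hdegHi : ∀ s i j, C1.deg 0 (Hinv s i j))
    (hdegG : ∀ s i j, C2.deg 0 (Gm s i j)) (hdegGi : ∀ s i j, C2.deg 0 (Gi s i j))
    (hγ : ∀ s, (H s).map ⇑γ = Gm s.castSucc * Gi s.succ)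
    (hγd : ∀ x, γ (C1.d x) = C2.d (γ x))
    (idx : Fin p → Fin p) :
    γ ((List.ofFn (fun k : Fin p =>
          ((((List.finRange p).take (idx k : ℕ)).map H).prod *
            ((H (idx k)).map ⇑C1.d) * Hinv (idx k) *
            ((((List.finRange p).take (idx k : ℕ)).map Hinv).reverse).prod))).prod.trace) =
      (List.ofFn (fun k : Fin p =>
          (Gi (idx k).castSucc * (Gm (idx k).castSucc).map ⇑C2.d) -
            (Gi (idx k).succ * (Gm (idx k).succ).map ⇑C2.d))).prod.trace :=
  stmt_9_general C1 C2 n p H Hinv Gm Gi γ hinv hGinv hGinv' hdegG hdegGi hγ hγd idx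
end

section
/- For $G$ a matrix Lie group with left-invariant Maurer-Cartan form $\bar\theta = g^{-1}dg$, if $\theta_i = \mathrm{pr}_i^*\bar\theta$ are pullbacks to $\Delta^p \times G^{p+1}$ and $\theta = \sum_{i=0}^p t_i \theta_i$ with $\sum_{i=0}^p t_i = 1$, then the curvature $\Omega = d\theta + \frac{1}{2}[\theta,\theta]$ satisfies $\Omega = -\sum_{i=1}^p dt_i \wedge (\theta_0 - \theta_i) - \sum_{0 \le i < j \le p} t_i t_j (\theta_i - \theta_j)^2$. -/
open Finset in
lemma pair_sum' {A : Type*} [AddCommGroup A] (n : ℕ) (g : Fin n → Fin n → A)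
    (hdiag : ∀ i, g i i = 0) :
    ∑ i, ∑ j, g i j =
      ∑ i, ∑ j ∈ Finset.univ.filter (fun j => i < j), (g i j + g j i) := by
  have h1 : ∀ i : Fin n, ∑ j, g i j =
      ∑ j ∈ univ.filter (fun j => i < j), g i j +
      ∑ j ∈ univ.filter (fun j => j < i), g i j := by
    intro i
    rw [← Finset.sum_filter_add_sum_filter_not univ (fun j => i < j)]
    congr 1
    rw [show univ.filter (fun j => ¬ i < j) = insert i (univ.filter (fun j => j < i)) by
      ext j; simp only [Finset.mem_filter, Finset.mem_univ, true_and, Finset.mem_insert,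
        Fin.lt_def, Fin.ext_iff]; omega]
    rw [Finset.sum_insert (by simp), hdiag, zero_add]
  have h2 : ∑ i, ∑ j ∈ univ.filter (fun j => j < i), g i j =
      ∑ i, ∑ j ∈ univ.filter (fun j => i < j), g j i := by
    rw [Finset.sum_comm' (t' := univ) (s' := fun j => univ.filter (fun i => j < i))]
    intro x y; simp
  simp_rw [h1, Finset.sum_add_distrib, h2]

/-- Dupont's simplicial curvature formula.  In the algebra `A` of matrix-valued
forms on `Δ^p × G^{p+1}`, with barycentric coordinates `t i` (degree-zero, central,
summing to `1`), Maurer-Cartan pullbacks `θ i` satisfying `d(θ i) = -(θ i)²`, the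
simplicial connection `θ = ∑ tᵢ θᵢ` has curvature
`Ω = dθ + ½[θ,θ] = -∑_{i=1}^p dtᵢ ∧ (θ₀ - θᵢ) - ∑_{i<j} tᵢtⱼ (θᵢ - θⱼ)²`. -/
theorem stmt_14 {A : Type*} [Ring A] [Algebra ℝ A] (p : ℕ)
    (d : A →ₗ[ℝ] A) (t : Fin (p + 1) → A) (θ : Fin (p + 1) → A)
    (hsum : ∑ i, t i = 1)
    (hcentral : ∀ i x, t i * x = x * t i)
    (hMC : ∀ i, d (θ i) = -(θ i * θ i))
    (hLeib : ∀ i x, d (t i * x) = d (t i) * x + t i * d x)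
    (hd1 : d 1 = 0) :
    d (∑ i, t i * θ i) +
        (2⁻¹ : ℝ) • ((∑ i, t i * θ i) * (∑ i, t i * θ i) +
          (∑ i, t i * θ i) * (∑ i, t i * θ i)) =
      -(∑ i : Fin p, d (t i.succ) * (θ 0 - θ i.succ)) -
        ∑ i : Fin (p + 1), ∑ j ∈ Finset.univ.filter (fun j => i < j),
          t i * t j * ((θ i - θ j) * (θ i - θ j)) := by
  set T := ∑ i, t i * θ i with hT
  have h2 : (2⁻¹ : ℝ) • (T * T + T * T) = T * T := by
    rw [← two_smul ℝ (T * T), smul_smul]; norm_num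
  have hdT : d T = (∑ i, d (t i) * θ i) - ∑ i, t i * (θ i * θ i) := by
    rw [hT, map_sum, ← Finset.sum_sub_distrib]
    refine Finset.sum_congr rfl fun i _ => ?_
    rw [hLeib, hMC, mul_neg, ← sub_eq_add_neg]
  have hdt0 : ∑ i, d (t i) = 0 := by rw [← map_sum, hsum, hd1]
  have h1 : (∑ i, d (t i) * θ i) =
      -(∑ i : Fin p, d (t i.succ) * (θ 0 - θ i.succ)) := by
    have h0 : d (t 0) = -∑ i : Fin p, d (t i.succ) := by
      rw [Fin.sum_univ_succ] at hdt0
      exact eq_neg_of_add_eq_zero_left hdt0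
    rw [Fin.sum_univ_succ, h0]
    simp only [neg_mul, Finset.sum_mul, mul_sub, Finset.sum_sub_distrib, neg_sub]
    abel
  have hTT : T * T = ∑ i, ∑ j, t i * t j * (θ i * θ j) := by
    rw [hT, Finset.sum_mul_sum]
    refine Finset.sum_congr rfl fun i _ => Finset.sum_congr rfl fun j _ => ?_
    rw [mul_assoc, ← mul_assoc (θ i), ← hcentral, mul_assoc (t j), ← mul_assoc]
  have hdiagsum : (∑ i, t i * (θ i * θ i)) = ∑ i, ∑ j, t i * t j * (θ i * θ i) := by
    refine Finset.sum_congr rfl fun i _ => ?_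
    rw [← mul_one (t i * (θ i * θ i)), ← hsum, Finset.mul_sum]
    refine Finset.sum_congr rfl fun j _ => ?_
    rw [← hcentral j, ← mul_assoc, hcentral j (t i)]
  have hg : ∑ i, ∑ j, (t i * t j * (θ i * θ j) - t i * t j * (θ i * θ i)) =
      -∑ i : Fin (p + 1), ∑ j ∈ Finset.univ.filter (fun j => i < j),
        t i * t j * ((θ i - θ j) * (θ i - θ j)) := by
    rw [pair_sum' (p + 1) (fun i j => t i * t j * (θ i * θ j) - t i * t j * (θ i * θ i)) (fun i => sub_self _)]
    have : ∀ i j : Fin (p + 1),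
        (t i * t j * (θ i * θ j) - t i * t j * (θ i * θ i)) +
        (t j * t i * (θ j * θ i) - t j * t i * (θ j * θ j)) =
        -(t i * t j * ((θ i - θ j) * (θ i - θ j))) := by
      intro i j
      rw [hcentral j (t i)]
      noncomm_ring
    simp only [this, Finset.sum_neg_distrib]
  rw [h2, hdT, h1, hTT, hdiagsum]
  simp only [Finset.sum_sub_distrib] at hg
  set P := ∑ i, ∑ j, t i * t j * (θ i * θ j)
  set D := ∑ i, ∑ j, t i * t j * (θ i * θ i)
  set Q := ∑ i : Fin (p + 1), ∑ j ∈ Finset.univ.filter (fun j => i < j),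
      t i * t j * ((θ i - θ j) * (θ i - θ j))
  have hQ : D - P = Q := by
    have h := congrArg (fun x => -x) hg
    simpa [neg_sub] using h
  rw [← hQ]; abel
end
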